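/- arXiv:1810.04257 — 2 statements merged into one kernel-verified Lean document; each statement's English description precedes it below -/
import Mathlib

section
/- Let M = ℝᵐ with the Euclidean metric, so TM = ℝᵐ × ℝᵐ with coordinates (xⁱ, vⁱ). Every λ-mirror vector field X on Tℝᵐ (i.e. L_X B = λB) decomposes uniquely as the sum of three vector fields: a vertical lift π★Y of a vector field Y on ℝᵐ, an extension Z̃ of a vector field Z on ℝᵐ, and λ times the horizontal lift π*P of the position vector field P = xⁱ∂ᵢ. -/
noncomputable section

/-!
The tangent manifold of Euclidean space `M = ℝᵐ` is `Tℝᵐ = ℝᵐ × ℝᵐ`, with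
coordinates `(xⁱ, vⁱ)`. Vector fields on `Tℝᵐ` are (smooth) maps
`(ℝᵐ × ℝᵐ) → (ℝᵐ × ℝᵐ)`; the Lie bracket is `[X,Y](p) = dY_p(X p) − dX_p(Y p)`.
The mirror map `B` sends `∂ᵢ ↦ ∂_{vⁱ}`, `∂_{vⁱ} ↦ 0`, i.e. `B(a,b) = (0,a)`.
-/

/-- the Lie bracket of vector fields on `ℝᵐ × ℝᵐ` -/
def vbracket {m : ℕ} (X Y : (Fin m → ℝ) × (Fin m → ℝ) → (Fin m → ℝ) × (Fin m → ℝ)) :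
    (Fin m → ℝ) × (Fin m → ℝ) → (Fin m → ℝ) × (Fin m → ℝ) :=
  fun p => fderiv ℝ Y p (X p) - fderiv ℝ X p (Y p)

/-- the mirror map `B` of `Tℝᵐ`: `B(a,b) = (0,a)` -/
def mirrorB (m : ℕ) : (Fin m → ℝ) × (Fin m → ℝ) →L[ℝ] (Fin m → ℝ) × (Fin m → ℝ) :=
  ContinuousLinearMap.prod 0 (ContinuousLinearMap.fst ℝ (Fin m → ℝ) (Fin m → ℝ))

/-- `X` is a `λ`-mirror vector field on `Tℝᵐ`: `L_X B = λ • B`, i.e.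
`[X, BY] − B[X,Y] = λ B Y` for every (smooth) vector field `Y`. -/
def IsLambdaMirror {m : ℕ} (lam : ℝ)
    (X : (Fin m → ℝ) × (Fin m → ℝ) → (Fin m → ℝ) × (Fin m → ℝ)) : Prop :=
  ∀ Y : (Fin m → ℝ) × (Fin m → ℝ) → (Fin m → ℝ) × (Fin m → ℝ), ContDiff ℝ (⊤ : ℕ∞) Y →
    ∀ p, vbracket X (fun q => mirrorB m (Y q)) p - mirrorB m (vbracket X Y p)
      = lam • mirrorB m (Y p)

/-- Every `λ`-mirror vector field `X` on `Tℝᵐ` decomposes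
uniquely as the sum of a vertical lift `π^★Y : p ↦ (0, Y(p.1))`, an extension
`Z̃ : p ↦ (Z(p.1), (dZ)_{p.1}(p.2))`, and `λ` times the horizontal lift
`π^*P : p ↦ (p.1, 0)` of the position vector field `P = xⁱ∂ᵢ`. -/
theorem lambda_mirror_decomposition (m : ℕ) (lam : ℝ)
    (X : (Fin m → ℝ) × (Fin m → ℝ) → (Fin m → ℝ) × (Fin m → ℝ))
    (hX : ContDiff ℝ (⊤ : ℕ∞) X) (hmir : IsLambdaMirror lam X) :
    ∃! YZ : ((Fin m → ℝ) → (Fin m → ℝ)) × ((Fin m → ℝ) → (Fin m → ℝ)),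
      ContDiff ℝ (⊤ : ℕ∞) YZ.1 ∧ ContDiff ℝ (⊤ : ℕ∞) YZ.2 ∧
        ∀ p : (Fin m → ℝ) × (Fin m → ℝ),
          X p = ((0 : Fin m → ℝ), YZ.1 p.1)
            + (YZ.2 p.1, fderiv ℝ YZ.2 p.1 p.2)
            + lam • (p.1, (0 : Fin m → ℝ)) := by
  have hXd : Differentiable ℝ X := hX.differentiable (by simp)
  -- the two pointwise consequences of the λ-mirror condition
  have hkey : ∀ (p : (Fin m → ℝ) × (Fin m → ℝ)) (a : Fin m → ℝ),
      (fderiv ℝ X p ((0 : Fin m → ℝ), a)).1 = 0 ∧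
      (fderiv ℝ X p ((0 : Fin m → ℝ), a)).2 = (fderiv ℝ X p (a, 0)).1 - lam • a := by
    intro p a
    have h1 := hmir (fun _ => (a, (0 : Fin m → ℝ))) contDiff_const p
    simp only [vbracket, fderiv_const, Pi.zero_apply, ContinuousLinearMap.zero_apply,
      zero_sub, map_neg, mirrorB, ContinuousLinearMap.prod_apply,
      ContinuousLinearMap.coe_fst'] at h1
    refine ⟨?_, ?_⟩
    · have h2 := congrArg Prod.fst h1; simpa using h2
    · have h2 := congrArg Prod.snd h1
      simp at h2
      linear_combination -h2
  set φ : (Fin m → ℝ) → (Fin m → ℝ) := fun x => (X (x, 0)).1 with hφdef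
  set Y : (Fin m → ℝ) → (Fin m → ℝ) := fun x => (X (x, 0)).2 with hYdef
  set Z : (Fin m → ℝ) → (Fin m → ℝ) := fun x => φ x - lam • x with hZdef
  have hsm : ContDiff ℝ (⊤ : ℕ∞) (fun x : Fin m → ℝ => X (x, 0)) :=
    hX.comp (contDiff_id.prodMk contDiff_const)
  have hφc : ContDiff ℝ (⊤ : ℕ∞) φ := contDiff_fst.comp hsm
  have hYc : ContDiff ℝ (⊤ : ℕ∞) Y := contDiff_snd.comp hsm
  have hφd : Differentiable ℝ φ := hφc.differentiable (by simp)
  have hZc : ContDiff ℝ (⊤ : ℕ∞) Z := hφc.sub (contDiff_id.const_smul lam)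
  -- derivative of `v ↦ X (x, v)`
  have hXv : ∀ x v : Fin m → ℝ, HasFDerivAt (fun v => X (x, v))
      ((fderiv ℝ X (x, v)).comp
        ((0 : (Fin m → ℝ) →L[ℝ] (Fin m → ℝ)).prod (ContinuousLinearMap.id ℝ (Fin m → ℝ)))) v := by
    intro x v
    exact (hXd (x, v)).hasFDerivAt.comp v (HasFDerivAt.prodMk (hasFDerivAt_const x v) (hasFDerivAt_id v))
  -- the first component of X does not depend on v
  have hX1 : ∀ x v : Fin m → ℝ, (X (x, v)).1 = φ x := by
    intro x v
    have hd : Differentiable ℝ (fun v : Fin m → ℝ => (X (x, v)).1) :=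
      fun v => ((hXv x v).fst).differentiableAt
    have h0 : ∀ v : Fin m → ℝ, fderiv ℝ (fun v : Fin m → ℝ => (X (x, v)).1) v = 0 := by
      intro v
      rw [((hXv x v).fst).fderiv]
      refine ContinuousLinearMap.ext fun a => ?_
      simpa using (hkey (x, v) a).1
    exact is_const_of_fderiv_eq_zero hd h0 v 0
  -- the x-derivative of the first component is the derivative of φ
  have hfst : ∀ (p : (Fin m → ℝ) × (Fin m → ℝ)) (a : Fin m → ℝ),
      (fderiv ℝ X p (a, 0)).1 = fderiv ℝ φ p.1 a := by
    intro p a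
    have h1 : HasFDerivAt (fun q : (Fin m → ℝ) × (Fin m → ℝ) => (X q).1)
        ((ContinuousLinearMap.fst ℝ _ _).comp (fderiv ℝ X p)) p := (hXd p).hasFDerivAt.fst
    have h2 : HasFDerivAt (fun q : (Fin m → ℝ) × (Fin m → ℝ) => (X q).1)
        ((fderiv ℝ φ p.1).comp (ContinuousLinearMap.fst ℝ (Fin m → ℝ) (Fin m → ℝ))) p := by
      have he : (fun q : (Fin m → ℝ) × (Fin m → ℝ) => (X q).1) = fun q => φ q.1 := by
        funext q; exact hX1 q.1 q.2
      rw [he]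
      exact (hφd p.1).hasFDerivAt.comp p hasFDerivAt_fst
    have h3 := DFunLike.congr_fun (h1.unique h2) (a, (0 : Fin m → ℝ))
    simpa using h3
  -- fderiv of Z
  have hZd : ∀ x : Fin m → ℝ, HasFDerivAt Z
      (fderiv ℝ φ x - lam • ContinuousLinearMap.id ℝ (Fin m → ℝ)) x := fun x =>
    (hφd x).hasFDerivAt.sub ((hasFDerivAt_id x).const_smul lam)
  -- the second component is affine in v
  have hX2 : ∀ x v : Fin m → ℝ, (X (x, v)).2 = Y x + fderiv ℝ φ x v - lam • v := by
    intro x v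
    set L : (Fin m → ℝ) →L[ℝ] (Fin m → ℝ) :=
      fderiv ℝ φ x - lam • ContinuousLinearMap.id ℝ (Fin m → ℝ) with hL
    have hd : Differentiable ℝ (fun v : Fin m → ℝ => (X (x, v)).2 - L v) :=
      fun v => (((hXv x v).snd).sub (L.hasFDerivAt)).differentiableAt
    have h0 : ∀ v : Fin m → ℝ, fderiv ℝ (fun v : Fin m → ℝ => (X (x, v)).2 - L v) v = 0 := by
      intro v
      rw [HasFDerivAt.fderiv (f := fun v : Fin m → ℝ => (X (x, v)).2 - L v) (((hXv x v).snd).sub L.hasFDerivAt)]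
      refine ContinuousLinearMap.ext fun a => ?_
      have hk := (hkey (x, v) a).2
      have hf := hfst (x, v) a
      simp [hL, hk, hf]
    have hc := is_const_of_fderiv_eq_zero hd h0 v 0
    simp only [hL, map_zero, sub_zero, ContinuousLinearMap.sub_apply,
      ContinuousLinearMap.smul_apply, ContinuousLinearMap.id_apply] at hc
    have : (X (x, v)).2 - (fderiv ℝ φ x v - lam • v) = (X (x, 0)).2 := hc
    linear_combination this
  refine ⟨(Y, Z), ⟨hYc, hZc, ?_⟩, ?_⟩
  · rintro ⟨x, v⟩
    have eZ : fderiv ℝ Z x = fderiv ℝ φ x - lam • ContinuousLinearMap.id ℝ (Fin m → ℝ) :=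
      (hZd x).fderiv
    refine Prod.ext ?_ ?_
    · simp only [Prod.fst_add, Prod.smul_fst, hZdef]
      rw [hX1 x v]
      module
    · simp only [Prod.snd_add, Prod.smul_snd, eZ, ContinuousLinearMap.sub_apply,
        ContinuousLinearMap.smul_apply, ContinuousLinearMap.id_apply]
      rw [hX2 x v]
      module
  · rintro ⟨Y', Z'⟩ ⟨hY', hZ', heq⟩
    have hpt : ∀ x : Fin m → ℝ,
        X (x, 0) = ((0 : Fin m → ℝ), Y' x) + (Z' x, fderiv ℝ Z' x (0 : Fin m → ℝ))
          + lam • (x, (0 : Fin m → ℝ)) := fun x => heq (x, 0)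
    refine Prod.ext ?_ ?_
    · funext x
      have h := congrArg Prod.snd (hpt x)
      simp only [Prod.snd_add, Prod.smul_snd, map_zero, smul_zero, add_zero, zero_add] at h
      exact h.symm
    · funext x
      have h := congrArg Prod.fst (hpt x)
      simp only [Prod.fst_add, Prod.smul_fst, zero_add] at h
      show Z' x = (X (x, 0)).1 - lam • x
      linear_combination -h
end
end

section
/- Let M = ℝᵐ with the Euclidean metric, so Tℝᵐ = ℝᵐ × ℝᵐ with coordinates (xⁱ, vⁱ). (a) A vector field X = A₁ⁱ∂ᵢ + A₂ʲ∂_{vʲ} on Tℝᵐ is 0-adjoint-mirror (L_X Bᵗ = 0) if and only if ∂A₂ʲ/∂xⁱ = 0 and ∂A₁ʲ/∂xⁱ = ∂A₂ʲ/∂vⁱ for all 1 ≤ i,j ≤ m. (b) An extension vector field X̃ = Aʲ∂ⱼ + vᵏ(∂Aⁱ/∂xᵏ)∂_{vⁱ} is 0-adjoint-mirror if and only if ∂²Aⁱ/∂xʲ∂xᵏ = 0 for all 1 ≤ i,j,k ≤ m, i.e. if and only if Aⁱ(x) = a₀ⁱ + aⱼⁱxʲ for constants a₀ⁱ, aⱼⁱ.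 -/
noncomputable section

/-- the adjoint mirror map `Bᵗ` of `Tℝᵐ`: `Bᵗ(a,b) = (b,0)` -/
def mirrorBt (m : ℕ) : (Fin m → ℝ) × (Fin m → ℝ) →L[ℝ] (Fin m → ℝ) × (Fin m → ℝ) :=
  ContinuousLinearMap.prod (ContinuousLinearMap.snd ℝ (Fin m → ℝ) (Fin m → ℝ)) 0

/-- `X` is a `0`-adjoint-mirror vector field on `Tℝᵐ`: `L_X Bᵗ = 0`, i.e.
`[X, BᵗY] − Bᵗ[X,Y] = 0` for every (smooth) vector field `Y`. -/
def IsAdjointMirrorZero {m : ℕ}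
    (X : (Fin m → ℝ) × (Fin m → ℝ) → (Fin m → ℝ) × (Fin m → ℝ)) : Prop :=
  ∀ Y : (Fin m → ℝ) × (Fin m → ℝ) → (Fin m → ℝ) × (Fin m → ℝ), ContDiff ℝ (⊤ : ℕ∞) Y →
    ∀ p, vbracket X (fun q => mirrorBt m (Y q)) p - mirrorBt m (vbracket X Y p) = 0

lemma mirrorBt_apply {m : ℕ} (w : (Fin m → ℝ) × (Fin m → ℝ)) :
    mirrorBt m w = (w.2, 0) := rfl

lemma isAMZ_iff_comm {m : ℕ} (X : (Fin m → ℝ) × (Fin m → ℝ) → (Fin m → ℝ) × (Fin m → ℝ)) :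
    IsAdjointMirrorZero X ↔
      ∀ p w, mirrorBt m (fderiv ℝ X p w) = fderiv ℝ X p (mirrorBt m w) := by
  constructor
  · intro h p w
    have := h (fun _ => w) contDiff_const p
    simp only [vbracket, fderiv_fun_const, Pi.zero_apply, ContinuousLinearMap.zero_apply,
      zero_sub, map_neg] at this
    have h2 : -fderiv ℝ X p (mirrorBt m w) + mirrorBt m (fderiv ℝ X p w) = 0 := by
      linear_combination (norm := abel) this
    linear_combination (norm := abel) h2
  · intro h Y hY p
    have hYd : DifferentiableAt ℝ Y p := (hY.differentiable (by simp) p)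
    have hBY : fderiv ℝ (fun q => mirrorBt m (Y q)) p = (mirrorBt m).comp (fderiv ℝ Y p) :=
      ((mirrorBt m).hasFDerivAt.comp p hYd.hasFDerivAt).fderiv
    simp only [vbracket, hBY, ContinuousLinearMap.comp_apply, map_sub]
    have := h p (Y p)
    linear_combination (norm := abel) this

lemma clm_zero_of_single {m : ℕ} {F : Type*} [NormedAddCommGroup F] [NormedSpace ℝ F]
    (φ : (Fin m → ℝ) →L[ℝ] F) (h : ∀ i, φ (Pi.single i 1) = 0) (a : Fin m → ℝ) : φ a = 0 := by
  have ha : a = ∑ i, (a i) • (Pi.single i 1 : Fin m → ℝ) := by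
    rw [← Finset.univ_sum_single a]
    exact Finset.sum_congr rfl fun i _ => by rw [← Pi.single_smul]; simp
  rw [ha, map_sum]
  simp [h]

lemma comm_iff_comp {m : ℕ} (X : (Fin m → ℝ) × (Fin m → ℝ) → (Fin m → ℝ) × (Fin m → ℝ))
    (hX : ContDiff ℝ (⊤ : ℕ∞) X) :
    (∀ p w, mirrorBt m (fderiv ℝ X p w) = fderiv ℝ X p (mirrorBt m w)) ↔
      ((∀ (p : (Fin m → ℝ) × (Fin m → ℝ)) (i : Fin m),
          fderiv ℝ (fun q => (X q).2) p ((Pi.single i 1 : Fin m → ℝ), (0 : Fin m → ℝ)) = 0)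
        ∧ ∀ (p : (Fin m → ℝ) × (Fin m → ℝ)) (i : Fin m),
          fderiv ℝ (fun q => (X q).1) p ((Pi.single i 1 : Fin m → ℝ), (0 : Fin m → ℝ))
            = fderiv ℝ (fun q => (X q).2) p ((0 : Fin m → ℝ), (Pi.single i 1 : Fin m → ℝ))) := by
  have hsnd : ∀ p w, fderiv ℝ (fun q => (X q).2) p w = (fderiv ℝ X p w).2 := fun p w => by
    rw [((hX.differentiable (by simp) p).hasFDerivAt.snd).fderiv]; rfl
  have hfst : ∀ p w, fderiv ℝ (fun q => (X q).1) p w = (fderiv ℝ X p w).1 := fun p w => by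
    rw [((hX.differentiable (by simp) p).hasFDerivAt.fst).fderiv]; rfl
  constructor
  · intro h
    constructor
    · intro p i
      have := h p ((Pi.single i 1 : Fin m → ℝ), (0 : Fin m → ℝ))
      rw [hsnd]
      have h2 := congrArg Prod.fst this
      simpa [mirrorBt_apply, Prod.mk_zero_zero] using h2
    · intro p i
      have := h p ((0 : Fin m → ℝ), (Pi.single i 1 : Fin m → ℝ))
      rw [hsnd, hfst]
      have h2 := congrArg Prod.fst this
      simp only [mirrorBt_apply] at h2
      exact h2.symm
  · rintro ⟨h1, h2⟩ p w
    -- reduce to component statements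
    have k1 : ∀ a : Fin m → ℝ, (fderiv ℝ X p (a, 0)).2 = 0 := by
      intro a
      have := clm_zero_of_single
        ((ContinuousLinearMap.snd ℝ (Fin m → ℝ) (Fin m → ℝ)).comp
          ((fderiv ℝ X p).comp (ContinuousLinearMap.inl ℝ (Fin m → ℝ) (Fin m → ℝ))))
        (fun i => by simpa using (hsnd p ((Pi.single i 1 : Fin m → ℝ), 0)) ▸ h1 p i) a
      simpa using this
    have k2 : ∀ b : Fin m → ℝ, (fderiv ℝ X p (b, 0)).1 = (fderiv ℝ X p (0, b)).2 := by
      intro b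
      have := clm_zero_of_single
        (((ContinuousLinearMap.fst ℝ (Fin m → ℝ) (Fin m → ℝ)).comp
          ((fderiv ℝ X p).comp (ContinuousLinearMap.inl ℝ (Fin m → ℝ) (Fin m → ℝ)))) -
         ((ContinuousLinearMap.snd ℝ (Fin m → ℝ) (Fin m → ℝ)).comp
          ((fderiv ℝ X p).comp (ContinuousLinearMap.inr ℝ (Fin m → ℝ) (Fin m → ℝ)))))
        (fun i => by
          have e1 := h2 p i
          rw [hsnd, hfst] at e1
          simp [e1]) b
      simp only [ContinuousLinearMap.sub_apply, ContinuousLinearMap.comp_apply,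
        ContinuousLinearMap.inl_apply, ContinuousLinearMap.inr_apply, sub_eq_zero] at this
      simpa using this
    have hadd : fderiv ℝ X p w = fderiv ℝ X p (w.1, 0) + fderiv ℝ X p (0, w.2) := by
      rw [← map_add]
      congr 1
      simp
    rw [mirrorBt_apply, mirrorBt_apply]
    refine Prod.ext ?_ ?_
    · show (fderiv ℝ X p w).2 = (fderiv ℝ X p (w.2, 0)).1
      rw [hadd, k2 w.2, Prod.snd_add, k1 w.1, zero_add]
    · show (0 : Fin m → ℝ) = (fderiv ℝ X p (w.2, 0)).2
      rw [k1 w.2]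

section PartB
variable {m : ℕ}

local notation "E" => (Fin m → ℝ)

lemma hasFDerivAt_XA (A : E → E) (hA : ContDiff ℝ (⊤ : ℕ∞) A) (p : E × E) :
    HasFDerivAt (fun p : E × E => (A p.1, fderiv ℝ A p.1 p.2))
      (((fderiv ℝ A p.1).comp (ContinuousLinearMap.fst ℝ E E)).prod
        ((fderiv ℝ A p.1).comp (ContinuousLinearMap.snd ℝ E E) +
          ((fderiv ℝ (fderiv ℝ A) p.1).comp (ContinuousLinearMap.fst ℝ E E)).flip p.2)) p := by
  have hA' : ContDiff ℝ (⊤ : ℕ∞) (fderiv ℝ A) := hA.fderiv_right (by simp)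
  have h1 : HasFDerivAt (fun q : E × E => A q.1)
      ((fderiv ℝ A p.1).comp (ContinuousLinearMap.fst ℝ E E)) p :=
    (hA.differentiable (by simp) p.1).hasFDerivAt.comp p hasFDerivAt_fst
  have hc : HasFDerivAt (fun q : E × E => fderiv ℝ A q.1)
      ((fderiv ℝ (fderiv ℝ A) p.1).comp (ContinuousLinearMap.fst ℝ E E)) p :=
    (hA'.differentiable (by simp) p.1).hasFDerivAt.comp p hasFDerivAt_fst
  have h2 := hc.clm_apply hasFDerivAt_snd
  exact HasFDerivAt.prodMk h1 h2

lemma fderiv_XA (A : E → E) (hA : ContDiff ℝ (⊤ : ℕ∞) A) (p : E × E) (w : E × E) :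
    fderiv ℝ (fun p : E × E => (A p.1, fderiv ℝ A p.1 p.2)) p w =
      (fderiv ℝ A p.1 w.1, fderiv ℝ A p.1 w.2 + fderiv ℝ (fderiv ℝ A) p.1 w.1 p.2) := by
  rw [(hasFDerivAt_XA A hA p).fderiv]
  rfl

/-- second derivative applied to a fixed vector -/
lemma fderiv_fderiv_apply (A : E → E) (hA : ContDiff ℝ (⊤ : ℕ∞) A) (v x w : E) :
    fderiv ℝ (fun y => fderiv ℝ A y v) x w = fderiv ℝ (fderiv ℝ A) x w v := by
  have hA' : ContDiff ℝ (⊤ : ℕ∞) (fderiv ℝ A) := hA.fderiv_right (by simp)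
  have h := (hA'.differentiable (by simp) x).hasFDerivAt.clm_apply (hasFDerivAt_const v x)
  rw [h.fderiv]
  simp

lemma amz_XA_iff (A : E → E) (hA : ContDiff ℝ (⊤ : ℕ∞) A) :
    IsAdjointMirrorZero (fun p : E × E => (A p.1, fderiv ℝ A p.1 p.2)) ↔
      ∀ (x v a : E), fderiv ℝ (fderiv ℝ A) x a v = 0 := by
  rw [isAMZ_iff_comm]
  constructor
  · intro h x v a
    have := h (x, v) (a, 0)
    rw [fderiv_XA A hA, fderiv_XA A hA, mirrorBt_apply, mirrorBt_apply] at this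
    have h2 := congrArg Prod.fst this
    simpa using h2
  · intro h p w
    rw [mirrorBt_apply, fderiv_XA A hA, fderiv_XA A hA, mirrorBt_apply]
    simp [h p.1 p.2 w.1, h p.1 p.2 w.2]

lemma second_basis_iff (A : E → E) (hA : ContDiff ℝ (⊤ : ℕ∞) A) :
    (∀ (x : E) (j k : Fin m),
        fderiv ℝ (fun y => fderiv ℝ A y (Pi.single j 1)) x (Pi.single k 1) = 0) ↔
      ∀ (x v a : E), fderiv ℝ (fderiv ℝ A) x a v = 0 := by
  constructor
  · intro h x v a
    have step1 : ∀ (k : Fin m) (u : E), fderiv ℝ (fderiv ℝ A) x (Pi.single k 1) u = 0 := by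
      intro k u
      exact clm_zero_of_single (fderiv ℝ (fderiv ℝ A) x (Pi.single k 1))
        (fun j => by rw [← fderiv_fderiv_apply A hA]; exact h x j k) u
    have step2 := clm_zero_of_single ((fderiv ℝ (fderiv ℝ A) x).flip v)
      (fun k => by simpa using step1 k v) a
    simpa using step2
  · intro h x j k
    rw [fderiv_fderiv_apply A hA]
    exact h x (Pi.single j 1) (Pi.single k 1)

lemma second_zero_iff_affine (A : E → E) (hA : ContDiff ℝ (⊤ : ℕ∞) A) :
    (∀ (x v a : E), fderiv ℝ (fderiv ℝ A) x a v = 0) ↔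
      ∃ (a₀ : E) (L : E →L[ℝ] E), ∀ x, A x = a₀ + L x := by
  have hA' : ContDiff ℝ (⊤ : ℕ∞) (fderiv ℝ A) := hA.fderiv_right (by simp)
  constructor
  · intro h
    have hzero : ∀ x, fderiv ℝ (fderiv ℝ A) x = 0 := fun x =>
      ContinuousLinearMap.ext fun a => ContinuousLinearMap.ext fun v => h x v a
    have hconst : ∀ x, fderiv ℝ A x = fderiv ℝ A 0 :=
      fun x => is_const_of_fderiv_eq_zero (hA'.differentiable (by simp)) hzero x 0
    set L := fderiv ℝ A 0 with hL
    refine ⟨A 0, L, fun x => ?_⟩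
    have hg : ∀ x, HasFDerivAt (fun y => A y - L y) (0 : E →L[ℝ] E) x := by
      intro x
      have := (hA.differentiable (by simp) x).hasFDerivAt.sub L.hasFDerivAt
      rwa [hconst x, sub_self] at this
    have hgd : Differentiable ℝ (fun y => A y - L y) := fun x => (hg x).differentiableAt
    have := is_const_of_fderiv_eq_zero hgd (fun x => (hg x).fderiv) x 0
    simp only [map_zero, sub_zero] at this
    rw [← this]
    abel
  · rintro ⟨a₀, L, hL⟩ x v a
    have hAeq : A = fun y => a₀ + L y := funext hL
    have hdA : ∀ y, fderiv ℝ A y = L := by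
      intro y
      rw [hAeq]
      exact (L.hasFDerivAt.const_add a₀).fderiv
    have : (fun y => fderiv ℝ A y v) = fun _ => L v := by
      funext y; rw [hdA]
    rw [← fderiv_fderiv_apply A hA v x a, this, fderiv_fun_const]
    simp
end PartB

/-- (a) A vector field `X = A₁ⁱ∂ᵢ + A₂ʲ∂_{vʲ}` on `Tℝᵐ` is
`0`-adjoint-mirror iff `∂A₂ʲ/∂xⁱ = 0` and `∂A₁ʲ/∂xⁱ = ∂A₂ʲ/∂vⁱ` for all `i, j`.
(b) An extension vector field `X̃ = Aʲ∂ⱼ + vᵏ(∂Aⁱ/∂xᵏ)∂_{vⁱ}` is `0`-adjoint-mirror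
iff `∂²Aⁱ/∂xʲ∂xᵏ = 0` for all `i,j,k`, i.e. iff `Aⁱ(x) = a₀ⁱ + aⱼⁱxʲ` for constants
`a₀ⁱ, aⱼⁱ`. -/
theorem adjoint_mirror_zero_euclidean (m : ℕ) :
    (∀ X : (Fin m → ℝ) × (Fin m → ℝ) → (Fin m → ℝ) × (Fin m → ℝ), ContDiff ℝ (⊤ : ℕ∞) X →
      (IsAdjointMirrorZero X ↔
        ((∀ (p : (Fin m → ℝ) × (Fin m → ℝ)) (i : Fin m),
            fderiv ℝ (fun q => (X q).2) p ((Pi.single i 1 : Fin m → ℝ), (0 : Fin m → ℝ)) = 0)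
          ∧ ∀ (p : (Fin m → ℝ) × (Fin m → ℝ)) (i : Fin m),
            fderiv ℝ (fun q => (X q).1) p ((Pi.single i 1 : Fin m → ℝ), (0 : Fin m → ℝ))
              = fderiv ℝ (fun q => (X q).2) p ((0 : Fin m → ℝ), (Pi.single i 1 : Fin m → ℝ)))))
    ∧ (∀ A : (Fin m → ℝ) → (Fin m → ℝ), ContDiff ℝ (⊤ : ℕ∞) A →
        ((IsAdjointMirrorZero (fun p => (A p.1, fderiv ℝ A p.1 p.2)) ↔
            ∀ (x : Fin m → ℝ) (j k : Fin m),
              fderiv ℝ (fun y => fderiv ℝ A y (Pi.single j 1)) x (Pi.single k 1) = 0)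
          ∧ (IsAdjointMirrorZero (fun p => (A p.1, fderiv ℝ A p.1 p.2)) ↔
              ∃ (a₀ : Fin m → ℝ) (L : (Fin m → ℝ) →L[ℝ] (Fin m → ℝ)),
                ∀ x, A x = a₀ + L x))) := by
  refine ⟨fun X hX => (isAMZ_iff_comm X).trans (comm_iff_comp X hX), fun A hA => ?_⟩
  have h1 := (amz_XA_iff A hA).trans (second_basis_iff A hA).symm
  exact ⟨h1, h1.trans ((second_basis_iff A hA).trans (second_zero_iff_affine A hA))⟩

end
end
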